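/- arXiv:0711.3385 — 3 statements merged into one kernel-verified Lean document; each statement's English description precedes it below -/
import Mathlib

section
/- Fix i ∈ I_n. If condition (3.7) holds for the pair (i,j) for every j ∈ I_n∖{i}, then condition (C_i) holds. -/
open Filter Topology Set

noncomputable section

/-- `alphaLV a i x = Σ_j a i j * x j`. -/
def alphaLV {n : ℕ} (a : Fin n → Fin n → ℝ) (i : Fin n) (x : Fin n → ℝ) : ℝ :=
  ∑ j, a i j * x j

/-- A solution of the Lotka–Volterra system `x_i' = b_i x_i (1 - α_i x)` on `[0,∞)`
with values in the nonnegative orthant. -/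
def IsLVSolution {n : ℕ} (b : Fin n → ℝ) (a : Fin n → Fin n → ℝ)
    (x : ℝ → Fin n → ℝ) : Prop :=
  (∀ t ∈ Set.Ici (0:ℝ), ∀ i, 0 ≤ x t i) ∧
  (∀ t ∈ Set.Ici (0:ℝ), ∀ i,
    HasDerivWithinAt (fun s => x s i)
      (b i * x t i * (1 - alphaLV a i (x t))) (Set.Ici 0) t)

/-- An equilibrium of the Lotka–Volterra system in `ℝ^n_+`. -/
def IsLVEquilibrium {n : ℕ} (b : Fin n → ℝ) (a : Fin n → Fin n → ℝ)
    (y : Fin n → ℝ) : Prop :=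
  (∀ i, 0 ≤ y i) ∧ ∀ i, b i * y i * (1 - alphaLV a i y) = 0

/-- `y` is a global attractor: it is an equilibrium and every solution starting in
the open positive orthant converges to it. -/
def IsGlobalAttractor {n : ℕ} (b : Fin n → ℝ) (a : Fin n → Fin n → ℝ)
    (y : Fin n → ℝ) : Prop :=
  IsLVEquilibrium b a y ∧
  ∀ x : ℝ → Fin n → ℝ, IsLVSolution b a x → (∀ i, 0 < x 0 i) →
    ∀ i, Tendsto (fun t => x t i) atTop (nhds (y i))

open Classical in
/-- The projection `u^J`: `u` on `J`, zero off `J`. -/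
def projLV {n : ℕ} (u : Fin n → ℝ) (J : Set (Fin n)) : Fin n → ℝ :=
  fun i => if i ∈ J then u i else 0

open Classical in
/-- The vector `U` of (3.1), with the index set `I_n` replaced by `S`. -/
def Uvec {n : ℕ} (a : Fin n → Fin n → ℝ) (S : Set (Fin n)) (i : Fin n) : ℝ :=
  if ∃ j ∈ S, j ≠ i ∧ (a i i ≤ a j i ∨ a i j = 0) then (a i i)⁻¹
  else if (∀ j ∈ S, j ≠ i → a j i < a i i) ∧
      (∀ j ∈ S, ∀ k ∈ S, j ≠ i → k ≠ i → a j k ≤ a i k) then 0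
  else sSup {r | ∃ j ∈ S, ∃ k ∈ S, j ≠ i ∧ k ≠ i ∧ a i j < a k j ∧
      r = (a k j - a i j) / (a i i * a k j - a i j * a k i)}

/-- Condition `(C_k)` relative to a vector `U`: either `U^{I_n∖{k}}` is below `γ_k`,
or every point of `γ_k ∩ [0, U^{I_n∖{k}}]` is above `γ_j` for every `j ≠ k`. -/
def CondC {n : ℕ} (a : Fin n → Fin n → ℝ) (U : Fin n → ℝ) (k : Fin n) : Prop :=
  alphaLV a k (projLV U (({k} : Set (Fin n))ᶜ)) < 1 ∨
  ∀ j, j ≠ k → ∀ x : Fin n → ℝ,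
    (∀ i, 0 ≤ x i ∧ x i ≤ projLV U (({k} : Set (Fin n))ᶜ) i) →
    alphaLV a k x = 1 → 1 < alphaLV a j x

/-- Condition (3.7) for the pair `(i,j)` relative to a vector `U`. -/
def Cond37 {n : ℕ} (a : Fin n → Fin n → ℝ) (U : Fin n → ℝ) (i j : Fin n) : Prop :=
  max 0 (a i j / a j j * (1 - alphaLV a j (projLV U (({i, j} : Set (Fin n))ᶜ))))
    < 1 - alphaLV a i (projLV U (({i, j} : Set (Fin n))ᶜ))

/-- The vector `Y = (1/a₁₁, …, 1/aₙₙ)`. -/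
def Yvec {n : ℕ} (a : Fin n → Fin n → ℝ) : Fin n → ℝ := fun i => (a i i)⁻¹

/-! The second alternative of `(C_i)` always holds. Let `x ∈ γ_i ∩ [0, U^{I_n∖{i}}]` and `j ≠ i`.
Since `α_i x = 1`, the positivity part of (3.7) forces `a_im x_m ≥ 1 - α_i U^{I_n∖{i,m}} > 0` for
every `m ≠ i`. Pick `M ≠ i` maximising `r = a_jM / a_iM`; as `a_jk ≤ r a_ik` off `i`, lowering `x` to
the corner `U^{I_n∖{i}}` of the cell can only decrease `α_j - r α_i`, which gives
`α_j x ≥ r (1 - α_i W) + α_j W` with `W = U^{I_n∖{i,M}}`. If `M = j` this exceeds `1` by (3.7) for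
`(i, j)`. Otherwise `U_j ≥ x_j > 0`, and either `U_j = 1/a_jj`, so `α_j W ≥ a_jj U_j = 1`, or `U_j`
is the maximum of the ratios in (3.1), which yields `a_ik (1 - a_jj U_j) ≤ a_jk (1 - a_ij U_j)` for
`k ≠ j`; weighting `α_j W` and `α_i W` by these two factors gives the bound. -/

open Function

section Algebra

variable {n : ℕ} {a : Fin n → Fin n → ℝ}

lemma alphaLV_eq_dotProduct (a : Fin n → Fin n → ℝ) (i : Fin n) (x : Fin n → ℝ) :
    alphaLV a i x = a i ⬝ᵥ x := rfl

lemma alphaLV_eq_update_add (a : Fin n → Fin n → ℝ) (l m : Fin n) (x : Fin n → ℝ) :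
    alphaLV a l x = alphaLV a l (update x m 0) + a l m * x m := by
  have hx : x = update x m 0 + Pi.single m (x m) := by
    ext k
    rcases eq_or_ne k m with rfl | hk <;> simp [*]
  conv_lhs => rw [hx]
  simp only [alphaLV_eq_dotProduct, dotProduct_add, dotProduct_single]

lemma alphaLV_mono {l : Fin n} (hnn : 0 ≤ a l) {x y : Fin n → ℝ} (hxy : x ≤ y) :
    alphaLV a l x ≤ alphaLV a l y :=
  dotProduct_le_dotProduct_of_nonneg_left hxy hnn

lemma update_projLV_compl_singleton (U : Fin n → ℝ) (i m : Fin n) :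
    update (projLV U ({i}ᶜ : Set (Fin n))) m 0 = projLV U ({i, m}ᶜ : Set (Fin n)) := by
  ext k
  rcases eq_or_ne k m with rfl | hk
  · simp [projLV]
  · simp [projLV, hk]

lemma projLV_compl_singleton_self (U : Fin n → ℝ) (i : Fin n) :
    projLV U ({i}ᶜ : Set (Fin n)) i = 0 := by
  simp [projLV]

lemma projLV_compl_pair_of_ne (U : Fin n → ℝ) {i m k : Fin n} (hki : k ≠ i) (hkm : k ≠ m) :
    projLV U ({i, m}ᶜ : Set (Fin n)) k = U k := by
  simp [projLV, hki, hkm]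

end Algebra

section Ratio

/- `(aqp - ajp) / (ajj * aqp - ajp * aqj)` is an element of the set whose supremum is `U_j` in
the third case of (3.1), with `p, q ≠ j` and `ajp < aqp`. -/

variable {ajj ajp aqp aqj : ℝ}

lemma ratio_denom_pos (hjp : 0 ≤ ajp) (hqj0 : 0 ≤ aqj) (hqj : aqj < ajj) (hlt : ajp < aqp) :
    0 < ajj * aqp - ajp * aqj := by
  nlinarith

lemma mul_ratio_lt_one (hjp : 0 < ajp) (hqj0 : 0 ≤ aqj) (hqj : aqj < ajj) (hlt : ajp < aqp) :
    ajj * ((aqp - ajp) / (ajj * aqp - ajp * aqj)) < 1 := by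
  rw [mul_div_assoc', div_lt_one (ratio_denom_pos hjp.le hqj0 hqj hlt)]
  nlinarith

lemma le_of_ratio_le {u : ℝ} (hd : 0 < ajj * aqp - ajp * aqj)
    (hu : (aqp - ajp) / (ajj * aqp - ajp * aqj) ≤ u) :
    aqp * (1 - ajj * u) ≤ ajp * (1 - aqj * u) := by
  rw [div_le_iff₀ hd] at hu
  linarith

end Ratio

section Uvec

variable {n : ℕ} {a : Fin n → Fin n → ℝ} {j : Fin n}

lemma Uvec_univ_eq_inv_or (hnn : ∀ k l, 0 ≤ a k l) (hpos : 0 < Uvec a Set.univ j) :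
    Uvec a Set.univ j = (a j j)⁻¹ ∨
      (∀ m ≠ j, a m j < a j j) ∧ a j j * Uvec a Set.univ j < 1 ∧
      ∀ m k, m ≠ j → k ≠ j →
        a m k * (1 - a j j * Uvec a Set.univ j) ≤ a j k * (1 - a m j * Uvec a Set.univ j) := by
  by_cases h1 : ∃ m ∈ Set.univ, m ≠ j ∧ (a j j ≤ a m j ∨ a j m = 0)
  · exact Or.inl (by rw [Uvec, if_pos h1])
  have hcol : ∀ m ≠ j, a m j < a j j := fun m hm => by
    by_contra! h; exact h1 ⟨m, trivial, hm, Or.inl h⟩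
  have hrow : ∀ m ≠ j, 0 < a j m := fun m hm =>
    (hnn j m).lt_of_ne' fun h => h1 ⟨m, trivial, hm, Or.inr h⟩
  set S : Set ℝ := {r | ∃ p ∈ Set.univ, ∃ q ∈ Set.univ, p ≠ j ∧ q ≠ j ∧ a j p < a q p ∧
      r = (a q p - a j p) / (a j j * a q p - a j p * a q j)}
  by_cases h2 : (∀ m ∈ Set.univ, m ≠ j → a m j < a j j) ∧
      ∀ m ∈ Set.univ, ∀ k ∈ Set.univ, m ≠ j → k ≠ j → a m k ≤ a j k
  · rw [Uvec, if_neg h1, if_pos h2] at hpos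
    exact absurd hpos (lt_irrefl 0)
  have hU : Uvec a Set.univ j = sSup S := by rw [Uvec, if_neg h1, if_neg h2]
  have hSfin : S.Finite := (Set.finite_range fun pq : Fin n × Fin n =>
      (a pq.2 pq.1 - a j pq.1) / (a j j * a pq.2 pq.1 - a j pq.1 * a pq.2 j)).subset
    fun r ⟨p, _, q, _, _, _, _, hr⟩ => ⟨(p, q), hr.symm⟩
  obtain ⟨m, -, k, -, hm, hk, hlt⟩ :
      ∃ m ∈ Set.univ, ∃ k ∈ Set.univ, m ≠ j ∧ k ≠ j ∧ a j k < a m k := by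
    push Not at h2
    exact h2 fun m _ hm => hcol m hm
  have hSne : S.Nonempty := ⟨_, k, trivial, m, trivial, hk, hm, hlt, rfl⟩
  have hQ : a j j * Uvec a Set.univ j < 1 := by
    obtain ⟨p, -, q, -, hp, hq, hlt, hr⟩ := hSne.csSup_mem hSfin
    rw [hU, hr]
    exact mul_ratio_lt_one (hrow p hp) (hnn q j) (hcol q hq) hlt
  refine Or.inr ⟨hcol, hQ, fun m k hm hk => ?_⟩
  rcases lt_or_ge (a j k) (a m k) with hlt | hle
  · exact le_of_ratio_le (ratio_denom_pos (hnn j k) (hnn m j) (hcol m hm) hlt)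
      (hU ▸ le_csSup hSfin.bddAbove ⟨k, trivial, m, trivial, hk, hm, hlt, rfl⟩)
  · calc a m k * (1 - a j j * Uvec a Set.univ j)
        ≤ a j k * (1 - a j j * Uvec a Set.univ j) := by gcongr
      _ ≤ a j k * (1 - a m j * Uvec a Set.univ j) := by
        gcongr
        · exact hnn j k
        · exact (hcol m hm).le

end Uvec

section Face

variable {n : ℕ} {a : Fin n → Fin n → ℝ} {i j : Fin n} {x V : Fin n → ℝ}

lemma one_sub_alphaLV_update_le_mul (hnn : 0 ≤ a i) (hxV : x ≤ V) (hax : alphaLV a i x = 1)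
    (m : Fin n) : 1 - alphaLV a i (update V m 0) ≤ a i m * x m := by
  have hle := alphaLV_mono hnn (update_le_update_iff.2 ⟨le_rfl, fun k _ => hxV k⟩ :
    update x m 0 ≤ update V m 0)
  linarith [alphaLV_eq_update_add a i m x]

lemma pos_of_one_sub_alphaLV_update_pos (hnn : 0 ≤ a i) (hx0 : 0 ≤ x) (hxV : x ≤ V)
    (hax : alphaLV a i x = 1) {m : Fin n} (hc : 0 < 1 - alphaLV a i (update V m 0)) :
    0 < a i m ∧ 0 < x m :=
  (pos_and_pos_or_neg_and_neg_of_mul_pos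
    (hc.trans_le (one_sub_alphaLV_update_le_mul hnn hxV hax m))).resolve_right
    fun h => (hx0 m).not_gt h.2

lemma mul_sub_alphaLV_le_sub_alphaLV {r : ℝ} (hxV : x ≤ V)
    (hr : ∀ k, x k < V k → a j k ≤ r * a i k) :
    r * (alphaLV a i x - alphaLV a i V) ≤ alphaLV a j x - alphaLV a j V := by
  simp only [alphaLV, Finset.mul_sum, ← Finset.sum_sub_distrib]
  refine Finset.sum_le_sum fun k _ => ?_
  rcases (hxV k).lt_or_eq with hk | hk
  · nlinarith [hr k hk]
  · simp [hk]

lemma add_alphaLV_le_alphaLV_of_le_mul {U : Fin n → ℝ} {M : Fin n} {r : ℝ} (hx0 : 0 ≤ x)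
    (hxU : x ≤ projLV U ({i}ᶜ : Set (Fin n))) (hax : alphaLV a i x = 1)
    (hr : ∀ k ≠ i, a j k ≤ r * a i k) (hrM : r * a i M = a j M) :
    r * (1 - alphaLV a i (projLV U ({i, M}ᶜ : Set (Fin n)))) +
      alphaLV a j (projLV U ({i, M}ᶜ : Set (Fin n))) ≤ alphaLV a j x := by
  rw [← update_projLV_compl_singleton]
  set V := projLV U ({i}ᶜ : Set (Fin n))
  have hslope := mul_sub_alphaLV_le_sub_alphaLV hxU fun k hk => hr k fun hki => by
    subst hki
    exact (hk.trans_le (projLV_compl_singleton_self U k).le).not_ge (hx0 k)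
  have hi := alphaLV_eq_update_add a i M V
  have hj := alphaLV_eq_update_add a j M V
  linear_combination hslope - r * hax + r * hi - hj + V M * hrM

end Face

section Estimates

variable {n : ℕ} {a : Fin n → Fin n → ℝ} {i j : Fin n} {W : Fin n → ℝ} {r : ℝ}

lemma mul_le_alphaLV (hnn : 0 ≤ a j) (hW : 0 ≤ W) (k : Fin n) : a j k * W k ≤ alphaLV a j W :=
  Finset.single_le_sum (fun l _ => mul_nonneg (hnn l) (hW l)) (Finset.mem_univ k)

lemma one_lt_of_cond37 {U : Fin n → ℝ} (hij : 0 < a i j) (hjj : 0 < a j j)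
    (h : Cond37 a U i j) (hr : a j j / a i j ≤ r) :
    1 < r * (1 - alphaLV a i (projLV U ({i, j}ᶜ : Set (Fin n)))) +
      alphaLV a j (projLV U ({i, j}ᶜ : Set (Fin n))) := by
  set c := 1 - alphaLV a i (projLV U ({i, j}ᶜ : Set (Fin n)))
  set d := 1 - alphaLV a j (projLV U ({i, j}ᶜ : Set (Fin n)))
  have hc : 0 < c := (le_max_left _ _).trans_lt h
  have hd : a i j / a j j * d < c := (le_max_right _ _).trans_lt h
  have : d < r * c := calc
    d < a j j / a i j * c := by
      rw [div_mul_eq_mul_div, div_lt_iff₀ hjj] at hd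
      rw [div_mul_eq_mul_div, lt_div_iff₀ hij]
      linarith
    _ ≤ r * c := by gcongr
  linarith

lemma one_lt_of_dominated (hnn : 0 ≤ a j) (hW : 0 ≤ W) (hij : 0 < a i j) (hijj : a i j < a j j)
    (hQ : a j j * W j < 1)
    (hdom : ∀ k ≠ j, a i k * (1 - a j j * W j) ≤ a j k * (1 - a i j * W j))
    (hc : 0 < 1 - alphaLV a i W) (hr : a j j / a i j ≤ r) :
    1 < r * (1 - alphaLV a i W) + alphaLV a j W := by
  set P := 1 - a i j * W j
  set Q := 1 - a j j * W j
  have hQP : Q ≤ P := by linarith [mul_le_mul_of_nonneg_right hijj.le (hW j)]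
  have hPr : Q < P * r := calc
    Q < P * (a j j / a i j) := by
      rw [mul_div_assoc', lt_div_iff₀ hij]
      nlinarith
    _ ≤ P * r := by gcongr; linarith
  have hsum : (P * a j j - Q * a i j) * W j ≤ P * alphaLV a j W - Q * alphaLV a i W := by
    simp only [alphaLV, Finset.mul_sum, ← Finset.sum_sub_distrib]
    refine (Finset.single_le_sum (f := fun k => (P * a j k - Q * a i k) * W k)
      (fun k _ => mul_nonneg ?_ (hW k)) (Finset.mem_univ j)).trans_eq
      (Finset.sum_congr rfl fun k _ => by ring)
    rcases eq_or_ne k j with rfl | hk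
    · nlinarith
    · linarith [hdom k hk]
  have : P * 1 < P * (r * (1 - alphaLV a i W) + alphaLV a j W) := by
    nlinarith [mul_pos hc (sub_pos.2 hPr)]
  exact lt_of_mul_lt_mul_left this (by linarith)

lemma one_lt_of_Uvec_univ_pos (hdiag : ∀ k, 0 < a k k) (hnn : ∀ k l, 0 ≤ a k l) {M : Fin n}
    (hji : j ≠ i) (hjM : j ≠ M) (hW : 0 ≤ projLV (Uvec a Set.univ) ({i, M}ᶜ : Set (Fin n)))
    (hUj : 0 < Uvec a Set.univ j) (hij : 0 < a i j)
    (hc : 0 < 1 - alphaLV a i (projLV (Uvec a Set.univ) ({i, M}ᶜ : Set (Fin n))))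
    (hr : a j j / a i j ≤ r) :
    1 < r * (1 - alphaLV a i (projLV (Uvec a Set.univ) ({i, M}ᶜ : Set (Fin n)))) +
      alphaLV a j (projLV (Uvec a Set.univ) ({i, M}ᶜ : Set (Fin n))) := by
  have hWj := projLV_compl_pair_of_ne (Uvec a Set.univ) hji hjM
  rcases Uvec_univ_eq_inv_or hnn hUj with hinv | ⟨hcol, hQ, hdom⟩
  · have hone := mul_le_alphaLV (hnn j) hW j
    rw [hWj, hinv, mul_inv_cancel₀ (hdiag j).ne'] at hone
    have hr0 : 0 < r := (div_pos (hdiag j) hij).trans_le hr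
    nlinarith [mul_pos hr0 hc]
  · rw [← hWj] at hQ hdom
    exact one_lt_of_dominated (hnn j) hW hij (hcol i hji.symm) hQ
      (fun k hk => hdom i k hji.symm hk) hc hr

end Estimates

theorem lemma3_2_ii_general (n : ℕ) (a : Fin n → Fin n → ℝ)
    (hdiag : ∀ i, 0 < a i i) (hnn : ∀ i j, 0 ≤ a i j)
    (i : Fin n) (h : ∀ j, j ≠ i → Cond37 a (Uvec a Set.univ) i j) :
    CondC a (Uvec a Set.univ) i := by
  set U := Uvec a Set.univ
  refine Or.inr fun j hj x hx hax => ?_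
  set V := projLV U ({i}ᶜ : Set (Fin n))
  have hx0 : 0 ≤ x := fun k => (hx k).1
  have hxV : x ≤ V := fun k => (hx k).2
  have hc : ∀ m ≠ i, 0 < 1 - alphaLV a i (projLV U ({i, m}ᶜ : Set (Fin n))) :=
    fun m hm => (le_max_left _ _).trans_lt (h m hm)
  have hpos : ∀ m ≠ i, 0 < a i m ∧ 0 < x m := fun m hm =>
    pos_of_one_sub_alphaLV_update_pos (hnn i) hx0 hxV hax
      (update_projLV_compl_singleton U i m ▸ hc m hm)
  obtain ⟨M, hMi, hM⟩ := Finset.exists_max_image (Finset.univ.erase i)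
    (fun k => a j k / a i k) ⟨j, Finset.mem_erase.2 ⟨hj, Finset.mem_univ j⟩⟩
  rw [Finset.mem_erase] at hMi
  set r := a j M / a i M
  have hr : ∀ k ≠ i, a j k ≤ r * a i k := fun k hk =>
    (div_le_iff₀ (hpos k hk).1).1 (hM k (Finset.mem_erase.2 ⟨hk, Finset.mem_univ k⟩))
  have hrj : a j j / a i j ≤ r := hM j (Finset.mem_erase.2 ⟨hj, Finset.mem_univ j⟩)
  refine lt_of_lt_of_le ?_
    (add_alphaLV_le_alphaLV_of_le_mul hx0 hxV hax hr (div_mul_cancel₀ _ (hpos M hMi.1).1.ne'))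
  rcases eq_or_ne M j with rfl | hMj
  · exact one_lt_of_cond37 (hpos M hj).1 (hdiag M) (h M hj) hrj
  · have hW : 0 ≤ projLV U ({i, M}ᶜ : Set (Fin n)) := by
      rw [← update_projLV_compl_singleton]
      simpa using (update_le_update_iff.2 ⟨le_rfl, fun k _ => (hx0 k).trans (hxV k)⟩ :
        update (0 : Fin n → ℝ) M 0 ≤ update V M 0)
    have hUj : 0 < U j := (hpos j hj).2.trans_le ((hxV j).trans_eq (by simp [V, projLV, hj]))
    exact one_lt_of_Uvec_univ_pos hdiag hnn hj hMj.symm hW hUj (hpos j hj).1 (hc M hMi.1) hrj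

/-- Lemma 3.2(ii): for a fixed `i`, condition (3.7) for all `j ≠ i` implies
condition `(C_i)`. -/
theorem lemma3_2_ii (n : ℕ) (hn : 2 ≤ n) (b : Fin n → ℝ) (a : Fin n → Fin n → ℝ)
    (hb : ∀ i, 0 < b i) (hdiag : ∀ i, 0 < a i i) (hnn : ∀ i j, 0 ≤ a i j)
    (i : Fin n) (h : ∀ j, j ≠ i → Cond37 a (Uvec a Set.univ) i j) :
    CondC a (Uvec a Set.univ) i :=
  lemma3_2_ii_general n a hdiag hnn i h
end
end

section
/- Assume a_{jℓ} < a_{ℓℓ} for all 1 ≤ ℓ < j ≤ n, and a_{jj} ≤ a_{j−1,j} ≤ ⋯ ≤ a_{1j} for all j ∈ I_n with j ≥ 2. Then the equilibrium Y^{{n}} (the point whose n-th coordinate is 1/a_{nn} and whose other coordinates are 0) is a global attractor. -/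
open Filter Topology Set

noncomputable section

/-!
Species `1, …, n-1` die out one after another. Suppose the species before `i` already vanish
and let `P` be the species after `i`. By (2.5) each `j ∈ P` is harmed by the remaining species
`insert i P` at most as much as `i` is, and strictly less by `i` itself, so with
`ℓ_k = log x_k / b_k` the difference `ℓ_i - ℓ_j` has derivative `α_j x - α_i x ≤ o(1) - c x_i`.
The remaining species persist as a whole, so `x_i` stays bounded below as long as every
`ℓ_i - ℓ_j` is bounded below; hence `min_j (ℓ_i - ℓ_j) → -∞`, and as the `ℓ_j` are bounded above,
`x_i → 0`. Once all other species vanish, species `n` obeys an asymptotically logistic equation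
and tends to `1/a_nn`.

Every such estimate rests on one barrier principle: if finitely many functions all decrease at a
uniform rate whenever all of them lie above a level `R`, then eventually one of them is below `R`.
-/

theorem le_add_mul_sub_of_hasDerivWithinAt_le {f d : ℝ → ℝ} {a b r : ℝ} (hab : a ≤ b)
    (hf : ∀ u ∈ Icc a b, HasDerivWithinAt f (d u) (Ici a) u) (hd : ∀ u ∈ Ico a b, d u ≤ r) :
    f b ≤ f a + r * (b - a) := by
  have hline : ∀ u ∈ Ico a b, HasDerivWithinAt (fun u => f a + r * (u - a)) r (Ici u) u :=
    fun u _ => by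
      simpa using ((((hasDerivAt_id u).sub_const a).const_mul r).const_add (f a)).hasDerivWithinAt
  exact image_le_of_deriv_right_le_deriv_boundary
    (fun u hu => (hf u hu).continuousWithinAt.mono Icc_subset_Ici_self)
    (fun u hu => (hf u (Ico_subset_Icc_self hu)).mono (Ici_subset_Ici.2 hu.1)) (by simp)
    (by fun_prop) hline hd (right_mem_Icc.2 hab)

theorem eventually_le_of_forall_le_add_mul_sub {F : ℝ → ℝ} {T R r : ℝ} (hr : r < 0)
    (hF : ContinuousOn F (Ici T))
    (H : ∀ s t, T ≤ s → s ≤ t → (∀ u ∈ Icc s t, R ≤ F u) → F t ≤ F s + r * (t - s)) :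
    ∀ᶠ t in atTop, F t ≤ R := by
  -- staying above `R` for ever would make `F` decrease linearly to `-∞`
  obtain ⟨s₀, hTs₀, hs₀⟩ : ∃ s₀, T ≤ s₀ ∧ F s₀ ≤ R := by
    by_contra! hgt
    have hline : Tendsto (fun t => F T + r * (t - T)) atTop atBot :=
      tendsto_atBot_add_const_left _ _
        ((tendsto_atTop_add_const_right _ _ tendsto_id).const_mul_atTop_of_neg hr)
    obtain ⟨t, hlt, hTt⟩ := ((hline.eventually_lt_atBot R).and (eventually_ge_atTop T)).exists
    linarith [hgt t hTt, H T t le_rfl hTt fun u hu => (hgt u hu.1).le]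
  filter_upwards [eventually_ge_atTop s₀] with t ht
  refine IsClosed.mem_of_ge_of_forall_exists_gt (s := {u | F u ≤ R}) ?_ hs₀ ht ?_
  · rw [inter_comm]
    exact (hF.mono fun u hu => hTs₀.trans hu.1).preimage_isClosed_of_isClosed
      isClosed_Icc isClosed_Iic
  · rintro u ⟨hu, hsu, hut⟩
    rcases (show F u ≤ R from hu).lt_or_eq with hlt | heq
    · have hnear : ∀ᶠ v in 𝓝[>] u, F v < R ∧ v ∈ Ioc u t :=
        ((((hF u (hTs₀.trans hsu)).mono fun v hv => (hTs₀.trans hsu).trans (le_of_lt hv)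
          ).tendsto.eventually_lt_const hlt).and (Ioc_mem_nhdsGT hut))
      obtain ⟨v, hvR, hv⟩ := hnear.exists
      exact ⟨v, le_of_lt hvR, hv⟩
    · -- `F` cannot rise above `R = F u`, since it decreases wherever `F ≥ R`
      by_contra! hempty
      have hge : ∀ v ∈ Icc u t, R ≤ F v := fun v hv => hv.1.eq_or_lt.elim (fun h => h ▸ heq.ge)
        fun h => le_of_not_ge fun hv' => hempty.subset ⟨hv', h, hv.2⟩
      have := H u t (hTs₀.trans hsu) hut.le hge
      nlinarith [hge t ⟨hut.le, le_rfl⟩, mul_neg_of_neg_of_pos hr (sub_pos.2 hut)]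

theorem eventually_exists_le_of_hasDerivWithinAt_le {ι : Type*} {s : Finset ι} (hs : s.Nonempty)
    {f d : ι → ℝ → ℝ} {t₀ R r : ℝ} (hr : r < 0)
    (hf : ∀ j ∈ s, ∀ t ≥ t₀, HasDerivWithinAt (f j) (d j t) (Ici t₀) t)
    (hd : ∀ᶠ t in atTop, (∀ j ∈ s, R ≤ f j t) → ∀ j ∈ s, d j t ≤ r) :
    ∀ᶠ t in atTop, ∃ j ∈ s, f j t ≤ R := by
  obtain ⟨T, hT⟩ := eventually_atTop.1 hd
  set F : ℝ → ℝ := fun t => s.inf' hs (f · t)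
  have hF : ContinuousOn F (Ici (max t₀ T)) :=
    ContinuousOn.finset_inf'_apply hs fun j hj t ht =>
      ((hf j hj t (le_of_max_le_left ht)).continuousWithinAt).mono
        (Ici_subset_Ici.2 (le_max_left _ _))
  -- between two times, `F` is bounded by the component that realises the minimum at the start
  have H : ∀ u v, max t₀ T ≤ u → u ≤ v → (∀ w ∈ Icc u v, R ≤ F w) → F v ≤ F u + r * (v - u) := by
    intro u v hu huv hR
    obtain ⟨j, hj, hju⟩ := Finset.exists_mem_eq_inf' hs (f · u)
    calc F v ≤ f j v := Finset.inf'_le _ hj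
      _ ≤ f j u + r * (v - u) :=
        le_add_mul_sub_of_hasDerivWithinAt_le huv
          (fun w hw => (hf j hj w ((le_max_left _ _).trans (hu.trans hw.1))).mono
            (Ici_subset_Ici.2 ((le_max_left _ _).trans hu)))
          fun w hw => hT w ((le_max_right _ _).trans (hu.trans hw.1))
            (fun k hk => (Finset.le_inf'_iff hs _).1 (hR w (Ico_subset_Icc_self hw)) k hk) j hj
      _ = F u + r * (v - u) := by rw [← hju]
  filter_upwards [eventually_le_of_forall_le_add_mul_sub hr hF H] with t ht
  exact (Finset.inf'_le_iff hs).1 ht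

theorem tendsto_sum_compl_mul_zero {ι : Type*} [Fintype ι] [DecidableEq ι] {S : Finset ι}
    {y : ℝ → ι → ℝ} (c : ι → ℝ) (hout : ∀ k ∉ S, Tendsto (y · k) atTop (𝓝 0)) :
    Tendsto (fun t => ∑ k ∈ Sᶜ, c k * y t k) atTop (𝓝 0) := by
  simpa using tendsto_finsetSum Sᶜ fun k hk => (hout k (Finset.mem_compl.1 hk)).const_mul (c k)

-- `ℓ_i = log x_i / b_i`, normalised so that its derivative along a solution is `1 - α_i x`.
def scaledLog {n : ℕ} (b : Fin n → ℝ) (x : ℝ → Fin n → ℝ) (i : Fin n) (t : ℝ) : ℝ :=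
  Real.log (x t i) / b i

section LotkaVolterra

variable {n : ℕ} {b : Fin n → ℝ} {a : Fin n → Fin n → ℝ}

theorem continuous_alphaLV (a : Fin n → Fin n → ℝ) (i : Fin n) : Continuous (alphaLV a i) := by
  unfold alphaLV
  fun_prop

theorem alphaLV_sub_alphaLV_le {i j : Fin n} {P : Finset (Fin n)} (hiP : i ∉ P)
    (hnn : ∀ k, 0 ≤ a i k) (hle : ∀ k ∈ P, a j k ≤ a i k) {y : Fin n → ℝ} (hy : ∀ k, 0 ≤ y k) :
    alphaLV a j y - alphaLV a i y ≤ ∑ k ∈ (insert i P)ᶜ, a j k * y k + (a j i - a i i) * y i := by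
  have hP : ∑ k ∈ P, (a j k - a i k) * y k ≤ 0 :=
    Finset.sum_nonpos fun k hk => mul_nonpos_of_nonpos_of_nonneg (by linarith [hle k hk]) (hy k)
  have hout : ∑ k ∈ (insert i P)ᶜ, (a j k - a i k) * y k ≤ ∑ k ∈ (insert i P)ᶜ, a j k * y k :=
    Finset.sum_le_sum fun k _ => by nlinarith [hnn k, hy k]
  have hsplit : alphaLV a j y - alphaLV a i y
      = (a j i - a i i) * y i + ∑ k ∈ P, (a j k - a i k) * y k
        + ∑ k ∈ (insert i P)ᶜ, (a j k - a i k) * y k := by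
    rw [← Finset.sum_insert hiP (f := fun k => (a j k - a i k) * y k), Finset.sum_add_sum_compl,
      alphaLV, alphaLV, ← Finset.sum_sub_distrib]
    simp only [sub_mul]
  linarith

theorem isLVEquilibrium_projLV_Yvec (b : Fin n → ℝ) (hdiag : ∀ i, 0 < a i i) {J : Set (Fin n)}
    (hJ : J.Subsingleton) : IsLVEquilibrium b a (projLV (Yvec a) J) := by
  refine ⟨fun i => ?_, fun i => ?_⟩
  · unfold projLV Yvec
    split_ifs
    exacts [(inv_pos.2 (hdiag i)).le, le_rfl]
  · by_cases hi : i ∈ J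
    · have hα : alphaLV a i (projLV (Yvec a) J) = 1 := by
        rw [alphaLV, Finset.sum_eq_single i (fun j _ hji => by
          simp [projLV, show j ∉ J from fun hj => hji (hJ hj hi)]) (by simp)]
        simp [projLV, Yvec, hi, (hdiag i).ne']
      rw [hα, sub_self, mul_zero]
    · simp [projLV, hi]

namespace IsLVSolution

variable {x : ℝ → Fin n → ℝ}

theorem continuousOn_alphaLV (hx : IsLVSolution b a x) (i : Fin n) :
    ContinuousOn (fun t => alphaLV a i (x t)) (Ici 0) :=
  (continuous_alphaLV a i).comp_continuousOn
    (continuousOn_pi.2 fun j t ht => (hx.2 t ht j).continuousWithinAt)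

-- `x_i e^{Kt}` is nondecreasing as long as `|b_i (1 - α_i x)| ≤ K`.
theorem pos (hx : IsLVSolution b a x) (hx0 : ∀ i, 0 < x 0 i) {t : ℝ} (ht : 0 ≤ t) (i : Fin n) :
    0 < x t i := by
  set c : ℝ → ℝ := fun u => b i * (1 - alphaLV a i (x u))
  have hc : ContinuousOn c (Icc 0 t) :=
    continuousOn_const.mul (continuousOn_const.sub
      ((hx.continuousOn_alphaLV i).mono Icc_subset_Ici_self))
  obtain ⟨K, hK⟩ := isCompact_Icc.exists_bound_of_continuousOn hc
  have hderiv : ∀ u ∈ Icc 0 t, HasDerivWithinAt (fun u => -(x u i * Real.exp (K * u)))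
      (-((c u + K) * x u i * Real.exp (K * u))) (Ici 0) u := fun u hu => by
    have hexp : HasDerivAt (fun s => Real.exp (K * s)) (Real.exp (K * u) * K) u := by
      simpa using ((hasDerivAt_id u).const_mul K).exp
    have hprod : HasDerivWithinAt (fun u => x u i * Real.exp (K * u))
        (b i * x u i * (1 - alphaLV a i (x u)) * Real.exp (K * u) + x u i * (Real.exp (K * u) * K))
        (Ici 0) u :=
      (hx.2 u hu.1 i).mul hexp.hasDerivWithinAt
    exact hprod.neg.congr_deriv (by ring)
  have hmono := le_add_mul_sub_of_hasDerivWithinAt_le (r := 0) ht hderiv fun u hu => by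
    have hcK := (abs_le.1 ((Real.norm_eq_abs _).symm.trans_le (hK u (Ico_subset_Icc_self hu)))).1
    have := mul_nonneg (mul_nonneg (by linarith : 0 ≤ c u + K) (hx.1 u hu.1 i))
      (Real.exp_pos (K * u)).le
    linarith
  have hg : 0 < x t i * Real.exp (K * t) := by
    simp only [zero_mul, mul_zero, Real.exp_zero, mul_one, add_zero] at hmono
    linarith [hx0 i]
  exact pos_of_mul_pos_left hg (Real.exp_pos _).le

theorem hasDerivWithinAt_log (hx : IsLVSolution b a x) (hx0 : ∀ i, 0 < x 0 i) (i : Fin n)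
    {t : ℝ} (ht : 0 ≤ t) :
    HasDerivWithinAt (fun s => Real.log (x s i)) (b i * (1 - alphaLV a i (x t))) (Ici 0) t := by
  convert (hx.2 t ht i).log (hx.pos hx0 ht i).ne' using 1
  field_simp [(hx.pos hx0 ht i).ne']

theorem eventually_le_of_inv_diag_lt (hx : IsLVSolution b a x) (hx0 : ∀ i, 0 < x 0 i)
    (hb : ∀ i, 0 < b i) (hnn : ∀ i j, 0 ≤ a i j) {i : Fin n} (hii : 0 < a i i) {M : ℝ}
    (hM : (a i i)⁻¹ < M) :
    ∀ᶠ t in atTop, x t i ≤ M := by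
  have hM0 : 0 < M := (inv_pos.2 hii).trans hM
  have hrate : b i * (1 - a i i * M) < 0 :=
    mul_neg_of_pos_of_neg (hb i) (by linarith [(inv_lt_iff_one_lt_mul₀' hii).1 hM])
  have hev := eventually_exists_le_of_hasDerivWithinAt_le (Finset.singleton_nonempty i)
    (f := fun _ t => Real.log (x t i)) (R := Real.log M) hrate
    (fun _ _ t ht => hx.hasDerivWithinAt_log hx0 i ht) (by
      filter_upwards [eventually_ge_atTop 0] with t ht hR j hj
      have hMx : M ≤ x t i := (Real.log_le_log_iff hM0 (hx.pos hx0 ht i)).1 (hR j hj)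
      have hα : a i i * x t i ≤ alphaLV a i (x t) :=
        Finset.single_le_sum (f := fun k => a i k * x t k)
          (fun k _ => mul_nonneg (hnn i k) (hx.1 t ht k)) (Finset.mem_univ i)
      have : a i i * M ≤ a i i * x t i := mul_le_mul_of_nonneg_left hMx hii.le
      exact mul_le_mul_of_nonneg_left (by linarith) (hb i).le)
  filter_upwards [hev, eventually_ge_atTop 0] with t ⟨_, _, h⟩ ht
  exact (Real.log_le_log_iff (hx.pos hx0 ht i) hM0).1 h

theorem eventually_exists_ge_of_alphaLV_le (hx : IsLVSolution b a x) (hx0 : ∀ i, 0 < x 0 i)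
    (hb : ∀ i, 0 < b i) {S : Finset (Fin n)} (hS : S.Nonempty) {δ ε : ℝ} (hδ : 0 < δ)
    (hε : 0 < ε)
    (h : ∀ᶠ t in atTop, (∀ k ∈ S, x t k ≤ δ) → ∀ k ∈ S, alphaLV a k (x t) ≤ 1 - ε) :
    ∀ᶠ t in atTop, ∃ k ∈ S, δ ≤ x t k := by
  have hrate : -(S.inf' hS b * ε) < 0 :=
    neg_lt_zero.2 (mul_pos ((Finset.lt_inf'_iff hS).2 fun k _ => hb k) hε)
  have hev := eventually_exists_le_of_hasDerivWithinAt_le hS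
    (f := fun k t => -Real.log (x t k)) (R := -Real.log δ) hrate
    (fun k _ t ht => (hx.hasDerivWithinAt_log hx0 k ht).neg) (by
      filter_upwards [h, eventually_ge_atTop 0] with t h ht hR k hk
      have hα := h (fun j hj => (Real.log_le_log_iff (hx.pos hx0 ht j) hδ).1
        (neg_le_neg_iff.1 (hR j hj))) k hk
      have hbk : S.inf' hS b * ε ≤ b k * ε :=
        mul_le_mul_of_nonneg_right (Finset.inf'_le _ hk) hε.le
      nlinarith [hb k])
  filter_upwards [hev, eventually_ge_atTop 0] with t ⟨k, hk, h⟩ ht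
  exact ⟨k, hk, (Real.log_le_log_iff hδ (hx.pos hx0 ht k)).1 (neg_le_neg_iff.1 h)⟩

theorem exists_pos_eventually_exists_ge (hx : IsLVSolution b a x) (hx0 : ∀ i, 0 < x 0 i)
    (hb : ∀ i, 0 < b i) {S : Finset (Fin n)} (hS : S.Nonempty)
    (hout : ∀ k ∉ S, Tendsto (x · k) atTop (𝓝 0)) :
    ∃ m > 0, ∀ᶠ t in atTop, ∃ k ∈ S, m ≤ x t k := by
  have hα0 : ∀ᶠ y in 𝓝 (0 : Fin n → ℝ), ∀ k, alphaLV a k y < 1 / 2 :=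
    eventually_all.2 fun k => (continuous_alphaLV a k).continuousAt.eventually_lt_const
      (by simp [alphaLV])
  obtain ⟨ρ, hρ, hball⟩ := Metric.eventually_nhds_iff.1 hα0
  have hsmall : ∀ᶠ t in atTop, ∀ j ∉ S, x t j ≤ ρ / 2 := eventually_all.2 fun j => by
    by_cases hj : j ∈ S
    · exact .of_forall fun _ h => absurd hj h
    · exact ((hout j hj).eventually (ge_mem_nhds (half_pos hρ))).mono fun _ h _ => h
  refine ⟨ρ / 2, half_pos hρ, eventually_exists_ge_of_alphaLV_le hx hx0 hb hS (half_pos hρ)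
    (by norm_num : (0 : ℝ) < 1 / 2) ?_⟩
  filter_upwards [hsmall, eventually_ge_atTop 0] with t hsmall ht hin k _
  have hnorm : ‖x t‖ ≤ ρ / 2 := (pi_norm_le_iff_of_nonneg (half_pos hρ).le).2 fun j => by
    rw [Real.norm_of_nonneg (hx.1 t ht j)]
    by_cases hj : j ∈ S
    exacts [hin j hj, hsmall j hj]
  linarith [hball (show dist (x t) 0 < ρ by rw [dist_zero_right]; linarith) k]

theorem tendsto_inv_diag_of_tendsto_zero (hx : IsLVSolution b a x) (hx0 : ∀ i, 0 < x 0 i)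
    (hb : ∀ i, 0 < b i) (hnn : ∀ i j, 0 ≤ a i j) {l : Fin n} (hll : 0 < a l l)
    (hout : ∀ j ≠ l, Tendsto (x · j) atTop (𝓝 0)) :
    Tendsto (x · l) atTop (𝓝 (a l l)⁻¹) := by
  refine tendsto_order.2 ⟨fun W hW => ?_, fun M hM => ?_⟩
  · rcases le_or_gt W 0 with hW0 | hW0
    · filter_upwards [eventually_ge_atTop 0] with t ht
      exact hW0.trans_lt (hx.pos hx0 ht l)
    obtain ⟨W', hWW', hW'⟩ := exists_between hW
    have hε : 0 < (1 - a l l * W') / 2 := by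
      linarith [(lt_inv_mul_iff₀ hll (b := 1)).1 (by rwa [mul_one])]
    have hdead := (tendsto_sum_compl_mul_zero (S := {l}) (a l) fun j hj =>
      hout j (Finset.notMem_singleton.1 hj)).eventually_lt_const hε
    filter_upwards [hx.eventually_exists_ge_of_alphaLV_le hx0 hb (Finset.singleton_nonempty l)
      (hW0.trans hWW') hε (by
        filter_upwards [hdead] with t hdead hxl k hk
        rw [Finset.mem_singleton.1 hk, alphaLV, Fintype.sum_eq_add_sum_compl l]
        nlinarith [hxl l (Finset.mem_singleton_self l)])] with t ⟨k, hk, h⟩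
    rw [Finset.mem_singleton.1 hk] at h
    linarith
  · obtain ⟨M', hM', hM'M⟩ := exists_between hM
    filter_upwards [hx.eventually_le_of_inv_diag_lt hx0 hb hnn hll hM'] with t h
    linarith

theorem hasDerivWithinAt_scaledLog (hx : IsLVSolution b a x) (hx0 : ∀ i, 0 < x 0 i)
    (hb : ∀ i, 0 < b i) (i : Fin n) {t : ℝ} (ht : 0 ≤ t) :
    HasDerivWithinAt (scaledLog b x i) (1 - alphaLV a i (x t)) (Ici 0) t :=
  ((hx.hasDerivWithinAt_log hx0 i ht).div_const (b i)).congr_deriv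
    (mul_div_cancel_left₀ _ (hb i).ne')

theorem exp_mul_scaledLog (hx : IsLVSolution b a x) (hx0 : ∀ i, 0 < x 0 i) (hb : ∀ i, 0 < b i)
    {t : ℝ} (ht : 0 ≤ t) (i : Fin n) : Real.exp (b i * scaledLog b x i t) = x t i := by
  rw [scaledLog, mul_div_cancel₀ _ (hb i).ne', Real.exp_log (hx.pos hx0 ht i)]

theorem exists_eventually_scaledLog_le (hx : IsLVSolution b a x) (hx0 : ∀ i, 0 < x 0 i)
    (hb : ∀ i, 0 < b i) (hdiag : ∀ i, 0 < a i i) (hnn : ∀ i j, 0 ≤ a i j) :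
    ∃ C, ∀ᶠ t in atTop, ∀ j, scaledLog b x j t ≤ C := by
  obtain ⟨C, hC⟩ := Finite.exists_le fun j => Real.log ((a j j)⁻¹ + 1) / b j
  refine ⟨C, eventually_all.2 fun j => ?_⟩
  filter_upwards [hx.eventually_le_of_inv_diag_lt hx0 hb hnn (hdiag j) (lt_add_one _),
    eventually_ge_atTop 0] with t h ht
  exact (div_le_div_of_nonneg_right (Real.log_le_log (hx.pos hx0 ht j) h) (hb j).le).trans (hC j)

theorem eventually_exists_scaledLog_sub_le (hx : IsLVSolution b a x) (hx0 : ∀ i, 0 < x 0 i)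
    (hb : ∀ i, 0 < b i) (hnn : ∀ i j, 0 ≤ a i j) {i : Fin n} {P : Finset (Fin n)}
    (hP : P.Nonempty) (hout : ∀ k ∉ insert i P, Tendsto (x · k) atTop (𝓝 0))
    (hlt : ∀ j ∈ P, a j i < a i i) (hle : ∀ j ∈ P, ∀ k ∈ P, a j k ≤ a i k) (R : ℝ) :
    ∀ᶠ t in atTop, ∃ j ∈ P, scaledLog b x i t - scaledLog b x j t ≤ R := by
  have hiP : i ∉ P := fun h => lt_irrefl _ (hlt i h)
  obtain ⟨m, hm, hpers⟩ :=
    hx.exists_pos_eventually_exists_ge hx0 hb (Finset.insert_nonempty i P) hout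
  set L := (insert i P).inf' (Finset.insert_nonempty i P) (fun k => Real.log m / b k) + min 0 R
  -- as long as all `ℓ_i - ℓ_j ≥ R`, the persistence of `insert i P` keeps `x_i` away from zero
  have hlow : ∀ t ≥ 0, (∃ k ∈ insert i P, m ≤ x t k) →
      (∀ j ∈ P, R ≤ scaledLog b x i t - scaledLog b x j t) → Real.exp (b i * L) ≤ x t i := by
    rintro t ht ⟨k, hk, hmk⟩ hR
    have hℓk : Real.log m / b k ≤ scaledLog b x k t :=
      div_le_div_of_nonneg_right (Real.log_le_log hm hmk) (hb k).le
    have hL := Finset.inf'_le (fun k => Real.log m / b k) hk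
    rw [← hx.exp_mul_scaledLog hx0 hb ht i]
    refine Real.exp_le_exp.2 (mul_le_mul_of_nonneg_left ?_ (hb i).le)
    rcases Finset.mem_insert.1 hk with rfl | hkP
    · linarith [min_le_left 0 R]
    · linarith [hR k hkP, min_le_right 0 R]
  set ξ := Real.exp (b i * L)
  set c := P.inf' hP fun j => a i i - a j i
  have hc : 0 < c := (Finset.lt_inf'_iff hP).2 fun j hj => sub_pos.2 (hlt j hj)
  have hξ : 0 < ξ := Real.exp_pos _
  have hdead : ∀ᶠ t in atTop, ∀ j, ∑ k ∈ (insert i P)ᶜ, a j k * x t k < c * ξ / 2 :=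
    eventually_all.2 fun j =>
      (tendsto_sum_compl_mul_zero (a j) hout).eventually_lt_const (by positivity)
  refine eventually_exists_le_of_hasDerivWithinAt_le hP
    (f := fun j t => scaledLog b x i t - scaledLog b x j t) (r := -(c * ξ / 2))
    (neg_lt_zero.2 (by positivity))
    (fun j _ t ht => (hx.hasDerivWithinAt_scaledLog hx0 hb i ht).sub
      (hx.hasDerivWithinAt_scaledLog hx0 hb j ht)) ?_
  filter_upwards [hpers, hdead, eventually_ge_atTop 0] with t hpers hdead ht hR j hj
  have hxi := hlow t ht hpers hR
  have hcj : c ≤ a i i - a j i := Finset.inf'_le _ hj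
  have hdrift := alphaLV_sub_alphaLV_le hiP (hnn i) (hle j hj) (hx.1 t ht)
  nlinarith [hdead j, mul_le_mul hcj hxi hξ.le (hc.le.trans hcj)]

theorem tendsto_zero_of_dominated (hx : IsLVSolution b a x) (hx0 : ∀ i, 0 < x 0 i)
    (hb : ∀ i, 0 < b i) (hdiag : ∀ i, 0 < a i i) (hnn : ∀ i j, 0 ≤ a i j) {i : Fin n}
    {P : Finset (Fin n)} (hP : P.Nonempty) (hout : ∀ k ∉ insert i P, Tendsto (x · k) atTop (𝓝 0))
    (hlt : ∀ j ∈ P, a j i < a i i) (hle : ∀ j ∈ P, ∀ k ∈ P, a j k ≤ a i k) :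
    Tendsto (x · i) atTop (𝓝 0) := by
  obtain ⟨C, hC⟩ := hx.exists_eventually_scaledLog_le hx0 hb hdiag hnn
  have hℓ : Tendsto (scaledLog b x i) atTop atBot := tendsto_atBot.2 fun R => by
    filter_upwards [hx.eventually_exists_scaledLog_sub_le hx0 hb hnn hP hout hlt hle (R - C), hC]
      with t ⟨j, _, h⟩ hCt
    linarith [hCt j]
  refine (Real.tendsto_exp_atBot.comp (hℓ.const_mul_atBot (hb i))).congr' ?_
  filter_upwards [eventually_ge_atTop 0] with t ht using hx.exp_mul_scaledLog hx0 hb ht i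

theorem tendsto_zero_of_lt (hx : IsLVSolution b a x) (hx0 : ∀ i, 0 < x 0 i) (hb : ∀ i, 0 < b i)
    (hdiag : ∀ i, 0 < a i i) (hnn : ∀ i j, 0 ≤ a i j) (h1 : ∀ l j : Fin n, l < j → a j l < a l l)
    (h2 : ∀ i i' j : Fin n, i ≤ i' → i' ≤ j → a i' j ≤ a i j) {i j : Fin n} (hij : i < j) :
    Tendsto (x · i) atTop (𝓝 0) := by
  induction i using WellFoundedLT.induction generalizing j with
  | _ i ih =>
    refine hx.tendsto_zero_of_dominated hx0 hb hdiag hnn (P := Finset.univ.filter (i < ·))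
      ⟨j, by simpa using hij⟩ (fun k hk => ?_) (fun j hj => h1 i j (by simpa using hj))
      fun j hj k hk => ?_
    · simp only [Finset.mem_insert, Finset.mem_filter, Finset.mem_univ, true_and, not_or,
        not_lt] at hk
      exact ih k (lt_of_le_of_ne hk.2 hk.1) (lt_of_le_of_ne hk.2 hk.1)
    · simp only [Finset.mem_filter, Finset.mem_univ, true_and] at hj hk
      rcases le_or_gt j k with hjk | hkj
      · exact h2 i j k hj.le hjk
      · exact (h1 k j hkj).le.trans (h2 i k k hk.le le_rfl)

end IsLVSolution

end LotkaVolterra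

theorem corollary4_6_general (n : ℕ) (b : Fin n → ℝ) (a : Fin n → Fin n → ℝ)
    (hb : ∀ i, 0 < b i) (hdiag : ∀ i, 0 < a i i) (hnn : ∀ i j, 0 ≤ a i j)
    (h1 : ∀ l j : Fin n, l < j → a j l < a l l)
    (h2 : ∀ i i' j : Fin n, i ≤ i' → i' ≤ j → a i' j ≤ a i j) :
    IsGlobalAttractor b a (projLV (Yvec a) {j : Fin n | (j : ℕ) = n - 1}) := by
  refine ⟨isLVEquilibrium_projLV_Yvec b hdiag fun i hi j hj => Fin.ext (hi.trans hj.symm),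
    fun x hx hx0 i => ?_⟩
  have hextinct {i j : Fin n} (hij : i < j) : Tendsto (x · i) atTop (𝓝 0) :=
    hx.tendsto_zero_of_lt hx0 hb hdiag hnn h1 h2 hij
  by_cases hi : (i : ℕ) = n - 1
  · simp only [projLV, Yvec, mem_ofPred_eq, hi, if_true]
    exact hx.tendsto_inv_diag_of_tendsto_zero hx0 hb hnn (hdiag i) fun j hj =>
      hextinct (lt_of_le_of_ne (Fin.le_def.2 (by omega)) hj)
  · simp only [projLV, mem_ofPred_eq, hi, if_false]
    exact hextinct (j := ⟨n - 1, by omega⟩) (Fin.lt_def.2 (show (i : ℕ) < n - 1 by omega))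

/-- Corollary 4.6: under (2.5), i.e. `a_{jℓ} < a_{ℓℓ}` for `ℓ < j` and
`a_{jj} ≤ a_{j-1,j} ≤ ⋯ ≤ a_{1j}`, the point `Y^{{n}}` is a global attractor. -/
theorem corollary4_6 (n : ℕ) (hn : 2 ≤ n) (b : Fin n → ℝ) (a : Fin n → Fin n → ℝ)
    (hb : ∀ i, 0 < b i) (hdiag : ∀ i, 0 < a i i) (hnn : ∀ i j, 0 ≤ a i j)
    (h1 : ∀ l j : Fin n, l < j → a j l < a l l)
    (h2 : ∀ i i' j : Fin n, i ≤ i' → i' ≤ j → a i' j ≤ a i j) :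
    IsGlobalAttractor b a (projLV (Yvec a) {j : Fin n | (j : ℕ) = n - 1}) :=
  corollary4_6_general n b a hb hdiag hnn h1 h2
end
end

section
/- Let x̂ ∈ ℝ^n_+ satisfy x̂_i = 0 for every i ∈ I_n with α_i x̂ > 1, and define ŷ ∈ ℝ^n_+ by ŷ_j = max{0, x̂_j + (1/a_{jj})(1 − α_j x̂)} for each j ∈ I_n. If a solution of the system with x(0) ∈ int ℝ^n_+ satisfies liminf_{t→∞} x_i(t) ≥ x̂_i for all i ∈ I_n, then it also satisfies limsup_{t→∞} x_j(t) ≤ ŷ_j for all j ∈ I_n. -/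
open Filter Topology Set

noncomputable section

/-! Split `α_j x = a_jj x_j + Σ_{i ≠ j} a_ji x_i`. Eventually each `x_i` exceeds `x̂_i - ε`, so
eventually `x_j' ≤ b_j x_j (c - a_jj x_j)` for every `c > 1 - Σ_{i ≠ j} a_ji x̂_i`. A solution of
such a logistic differential inequality first drops below any level `M > max 0 (c / a_jj)`
(above that level it decreases at a uniform rate) and then never exceeds it again, and
`max 0 ((1 - Σ_{i ≠ j} a_ji x̂_i) / a_jj)` is exactly `ŷ_j`. -/

section LogisticComparison

variable {u u' : ℝ → ℝ} {T A B c M : ℝ}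

lemma le_of_logistic_bound_of_le (hB : 0 < B) (hM : 0 < M) (hcM : c < A * M)
    (hderiv : ∀ t ≥ T, HasDerivWithinAt u (u' t) (Ici T) t)
    (hbound : ∀ t ≥ T, u' t ≤ B * u t * (c - A * u t)) (hT : u T ≤ M) :
    ∀ t ≥ T, u t ≤ M := by
  intro t ht
  refine image_le_of_deriv_right_lt_deriv_boundary' (B := fun _ => M) (B' := fun _ => 0)
    (fun s hs => (hderiv s hs.1).continuousWithinAt.mono Icc_subset_Ici_self)
    (fun s hs => (hderiv s hs.1).mono (Ici_subset_Ici.2 hs.1)) hT continuousOn_const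
    (fun s _ => hasDerivWithinAt_const s _ M) (fun s hs hus => ?_) ⟨ht, le_rfl⟩
  calc u' s ≤ B * M * (c - A * M) := hus ▸ hbound s hs.1
    _ < 0 := mul_neg_of_pos_of_neg (mul_pos hB hM) (sub_neg.2 hcM)

lemma exists_le_of_logistic_bound (hA : 0 ≤ A) (hB : 0 < B) (hM : 0 < M) (hcM : c < A * M)
    (hu : ∀ t ≥ T, 0 ≤ u t) (hderiv : ∀ t ≥ T, HasDerivWithinAt u (u' t) (Ici T) t)
    (hbound : ∀ t ≥ T, u' t ≤ B * u t * (c - A * u t)) :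
    ∃ t ≥ T, u t ≤ M := by
  by_contra! hgt
  set K := B * M * (A * M - c)
  have hK : 0 < K := mul_pos (mul_pos hB hM) (sub_pos.2 hcM)
  have hrate : ∀ s ≥ T, B * u s * (c - A * u s) ≤ -K := fun s hs => by
    have hMu := hgt s hs
    have hAu : A * M ≤ A * u s := mul_le_mul_of_nonneg_left hMu.le hA
    calc B * u s * (c - A * u s) ≤ B * u s * (c - A * M) :=
          mul_le_mul_of_nonneg_left (by linarith) (mul_nonneg hB.le (hM.trans hMu).le)
      _ ≤ B * M * (c - A * M) :=
          mul_le_mul_of_nonpos_right (mul_le_mul_of_nonneg_left hMu.le hB.le) (by linarith)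
      _ = -K := by ring
  have hline : ∀ s, HasDerivAt (fun s => u T - K * (s - T)) (-K) s := fun s => by
    simpa using (((hasDerivAt_id s).sub_const T).const_mul K).const_sub (u T)
  have hdecay : ∀ t ≥ T, u t ≤ u T - K * (t - T) := fun t ht =>
    image_le_of_deriv_right_le_deriv_boundary
      (fun s hs => (hderiv s hs.1).continuousWithinAt.mono Icc_subset_Ici_self)
      (fun s hs => (hderiv s hs.1).mono (Ici_subset_Ici.2 hs.1)) (by simp)
      (fun s _ => (hline s).continuousAt.continuousWithinAt)
      (fun s _ => (hline s).hasDerivWithinAt)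
      (fun s hs => (hbound s hs.1).trans (hrate s hs.1))
      ⟨ht, le_rfl⟩
  have hlate : T ≤ T + u T / K + 1 := by linarith [div_nonneg (hu T le_rfl) hK.le]
  have hdrop : u T - K * (T + u T / K + 1 - T) = -K := by field_simp; ring
  linarith [hdecay _ hlate, hu _ hlate]

lemma limsup_le_of_logistic_bound {c₀ : ℝ} (hA : 0 < A) (hB : 0 < B)
    (hu : ∀ t ≥ 0, 0 ≤ u t) (hderiv : ∀ t ≥ 0, HasDerivWithinAt u (u' t) (Ici 0) t)
    (hbound : ∀ c > c₀, ∀ᶠ t in atTop, u' t ≤ B * u t * (c - A * u t)) :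
    limsup u atTop ≤ max 0 (c₀ / A) := by
  refine le_of_forall_gt_imp_ge_of_dense fun M hM => ?_
  have hM0 : 0 < M := (le_max_left _ _).trans_lt hM
  have hc₀M : c₀ < A * M := (div_lt_iff₀' hA).1 ((le_max_right _ _).trans_lt hM)
  obtain ⟨T, hT⟩ := eventually_atTop.1 (hbound ((c₀ + A * M) / 2) (by linarith))
  have hcM : (c₀ + A * M) / 2 < A * M := by linarith
  have hT₀ : (0 : ℝ) ≤ max T 0 := le_max_right _ _
  have hderiv' : ∀ s, 0 ≤ s → ∀ t ≥ s, HasDerivWithinAt u (u' t) (Ici s) t :=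
    fun s hs t ht => (hderiv t (hs.trans ht)).mono (Ici_subset_Ici.2 hs)
  have hbound' : ∀ t ≥ max T 0, u' t ≤ B * u t * ((c₀ + A * M) / 2 - A * u t) :=
    fun t ht => hT t ((le_max_left _ _).trans ht)
  obtain ⟨t₀, ht₀, hut₀⟩ := exists_le_of_logistic_bound hA.le hB hM0 hcM
    (fun t ht => hu t (hT₀.trans ht)) (hderiv' _ hT₀) hbound'
  refine limsup_le_of_le (isCoboundedUnder_le_of_eventually_le atTop
    (eventually_atTop.2 ⟨0, hu⟩)) (eventually_atTop.2 ⟨t₀, ?_⟩)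
  exact le_of_logistic_bound_of_le hB hM0 hcM (hderiv' t₀ (hT₀.trans ht₀))
    (fun t ht => hbound' t (ht₀.trans ht)) hut₀

end LogisticComparison

lemma eventually_sum_mul_sub_lt_of_le_liminf {α ι : Type*} {F : Filter α} (s : Finset ι)
    {f : ι → α → ℝ} {l w : ι → ℝ} (hw : ∀ i ∈ s, 0 ≤ w i)
    (hf : ∀ i ∈ s, IsBoundedUnder (· ≥ ·) F (f i)) (hl : ∀ i ∈ s, l i ≤ liminf (f i) F)
    {δ : ℝ} (hδ : 0 < δ) :
    ∀ᶠ t in F, ∑ i ∈ s, w i * l i - δ < ∑ i ∈ s, w i * f i t := by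
  have hW : 0 < ∑ i ∈ s, w i + 1 := by linarith [Finset.sum_nonneg hw]
  set η := δ / (∑ i ∈ s, w i + 1)
  have hη : 0 < η := div_pos hδ hW
  have hηW : η * ∑ i ∈ s, w i < δ := by
    have : η * (∑ i ∈ s, w i + 1) = δ := div_mul_cancel₀ δ hW.ne'
    linarith
  filter_upwards [(eventually_all_finset s).2 fun i hi =>
    eventually_lt_of_lt_liminf ((sub_lt_self _ hη).trans_le (hl i hi)) (hf i hi)] with t ht
  calc ∑ i ∈ s, w i * l i - δ < ∑ i ∈ s, w i * l i - η * ∑ i ∈ s, w i := by linarith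
    _ = ∑ i ∈ s, w i * (l i - η) := by
      rw [Finset.mul_sum, ← Finset.sum_sub_distrib]
      exact Finset.sum_congr rfl fun i _ => by ring
    _ ≤ ∑ i ∈ s, w i * f i t :=
      Finset.sum_le_sum fun i hi => mul_le_mul_of_nonneg_left (ht i hi).le (hw i hi)

lemma alphaLV_eq_add_sum_erase {n : ℕ} (a : Fin n → Fin n → ℝ) (j : Fin n) (y : Fin n → ℝ) :
    alphaLV a j y = a j j * y j + ∑ i ∈ Finset.univ.erase j, a j i * y i :=
  (Finset.add_sum_erase _ _ (Finset.mem_univ j)).symm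

theorem lemma5_2_general (n : ℕ) (b : Fin n → ℝ) (a : Fin n → Fin n → ℝ)
    (hb : ∀ i, 0 < b i) (hdiag : ∀ i, 0 < a i i) (hnn : ∀ i j, 0 ≤ a i j)
    (xh : Fin n → ℝ)
    (yh : Fin n → ℝ)
    (hyh : ∀ j, yh j = max 0 (xh j + (a j j)⁻¹ * (1 - alphaLV a j xh)))
    (x : ℝ → Fin n → ℝ) (hsol : IsLVSolution b a x)
    (hlb : ∀ i, xh i ≤ liminf (fun t => x t i) atTop) :
    ∀ j, limsup (fun t => x t j) atTop ≤ yh j := by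
  intro j
  set c₀ := 1 - ∑ i ∈ Finset.univ.erase j, a j i * xh i with hc₀
  have hyh' : yh j = max 0 (c₀ / a j j) := by
    rw [hyh, alphaLV_eq_add_sum_erase, hc₀]
    congr 1
    field_simp [(hdiag j).ne']
    ring
  have hbdd : ∀ i, IsBoundedUnder (· ≥ ·) atTop (fun t => x t i) := fun i =>
    isBoundedUnder_of_eventually_ge (eventually_atTop.2 ⟨0, fun t ht => hsol.1 t ht i⟩)
  rw [hyh']
  refine limsup_le_of_logistic_bound (hdiag j) (hb j) (fun t ht => hsol.1 t ht j)
    (fun t ht => hsol.2 t ht j) fun c hc => ?_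
  filter_upwards [eventually_sum_mul_sub_lt_of_le_liminf _ (fun i _ => hnn j i)
    (fun i _ => hbdd i) (fun i _ => hlb i) (sub_pos.2 hc), eventually_ge_atTop 0] with t hlow ht
  rw [alphaLV_eq_add_sum_erase]
  exact mul_le_mul_of_nonneg_left (by linarith) (mul_nonneg (hb j).le (hsol.1 t ht j))

/-- Lemma 5.2: given an ultimate lower bound `x̂` (with `x̂_i = 0 whenever α_i x̂ > 1`)
for a solution in the open orthant, the vector `ŷ` of (5.1) is an ultimate upper
bound. -/
theorem lemma5_2 (n : ℕ) (hn : 2 ≤ n) (b : Fin n → ℝ) (a : Fin n → Fin n → ℝ)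
    (hb : ∀ i, 0 < b i) (hdiag : ∀ i, 0 < a i i) (hnn : ∀ i j, 0 ≤ a i j)
    (xh : Fin n → ℝ) (hxh0 : ∀ i, 0 ≤ xh i)
    (hxh : ∀ i, 1 < alphaLV a i xh → xh i = 0)
    (yh : Fin n → ℝ)
    (hyh : ∀ j, yh j = max 0 (xh j + (a j j)⁻¹ * (1 - alphaLV a j xh)))
    (x : ℝ → Fin n → ℝ) (hsol : IsLVSolution b a x) (hx0 : ∀ i, 0 < x 0 i)
    (hlb : ∀ i, xh i ≤ liminf (fun t => x t i) atTop) :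
    ∀ j, limsup (fun t => x t j) atTop ≤ yh j :=
  lemma5_2_general n b a hb hdiag hnn xh yh hyh x hsol hlb
end
end
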